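/- arXiv:2405.02777 — 3 statements merged into one kernel-verified Lean document; each statement's English description precedes it below -/
import Mathlib

section
/- Let (α, 𝒜, μ) be a measure space and p ≥ 1 a real number. Let (I_i)_{i∈s} and (I'_j)_{j∈t} be finite families of measurable sets of finite measure such that the I_i are pairwise disjoint and the I'_j are pairwise disjoint, and let (k_i)_{i∈s} and (l_j)_{j∈t} be real numbers. Then, writing μ(X) for the (finite) real-valued measure of X: ∑_{i∈s} (|k_i|·μ(I_i \ ⋃_{j∈t} I'_j))^p + ∑_{j∈t} (|l_j|·μ(I'_j \ ⋃_{i∈s} I_i))^p + ∑_{i∈s}∑_{j∈t} (|k_i|^p + |l_j|^p)·μ(I_i ∩ I'_j)^p ≤ ∑_{i∈s} (|k_i|·μ(I_i))^p + ∑_{j∈t} (|l_j|·μ(I'_j))^p. -/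
open MeasureTheory

private lemma add_rpow_le' {x y p : ℝ} (hx : 0 ≤ x) (hy : 0 ≤ y) (hp : 1 ≤ p) :
    x ^ p + y ^ p ≤ (x + y) ^ p := by
  lift x to NNReal using hx
  lift y to NNReal using hy
  rw [← NNReal.coe_rpow, ← NNReal.coe_rpow, ← NNReal.coe_add, ← NNReal.coe_add,
    ← NNReal.coe_rpow, NNReal.coe_le_coe]
  exact NNReal.add_rpow_le_rpow_add x y hp

private lemma sum_rpow_le_rpow_sum' {β : Type*} (s : Finset β) (f : β → ℝ) (p : ℝ) (hp : 1 ≤ p)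
    (hf : ∀ i ∈ s, 0 ≤ f i) :
    ∑ i ∈ s, f i ^ p ≤ (∑ i ∈ s, f i) ^ p := by
  induction s using Finset.cons_induction with
  | empty => simp [Real.zero_rpow (by linarith : p ≠ 0)]
  | cons a s ha ih =>
    rw [Finset.sum_cons, Finset.sum_cons]
    calc f a ^ p + ∑ i ∈ s, f i ^ p ≤ f a ^ p + (∑ i ∈ s, f i) ^ p := by
          gcongr
          exact ih (fun i hi => hf i (Finset.mem_cons_of_mem hi))
      _ ≤ (f a + ∑ i ∈ s, f i) ^ p :=
          add_rpow_le' (hf a (Finset.mem_cons_self ..))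
            (Finset.sum_nonneg fun i hi => hf i (Finset.mem_cons_of_mem hi)) hp

private lemma key_ineq {α : Type*} [MeasurableSpace α] (μ : Measure α)
    (p : ℝ) (hp : 1 ≤ p) {κ : Type*} [Fintype κ]
    (S : Set α) (hS : MeasurableSet S) (hSfin : μ S < ⊤)
    (T : κ → Set α) (hT : ∀ j, MeasurableSet (T j))
    (hTdisj : Pairwise (Function.onFun Disjoint T)) (c : ℝ) :
    (|c| * (μ (S \ ⋃ j, T j)).toReal) ^ p + ∑ j, |c| ^ p * (μ (S ∩ T j)).toReal ^ p
      ≤ (|c| * (μ S).toReal) ^ p := by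
  have hU : MeasurableSet (⋃ j, T j) := MeasurableSet.iUnion fun j => hT j
  have h1 : μ (S ∩ ⋃ j, T j) + μ (S \ ⋃ j, T j) = μ S :=
    measure_inter_add_diff S hU
  have h2 : μ (S ∩ ⋃ j, T j) = ∑ j, μ (S ∩ T j) := by
    rw [Set.inter_iUnion,
      measure_iUnion (hTdisj.mono fun i j h => h.mono Set.inter_subset_right Set.inter_subset_right)
        (fun j => hS.inter (hT j)), tsum_fintype]
  have hfin : ∀ j, μ (S ∩ T j) ≠ ⊤ :=
    fun j => ((measure_mono Set.inter_subset_left).trans_lt hSfin).ne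
  have hdfin : μ (S \ ⋃ j, T j) ≠ ⊤ :=
    ((measure_mono Set.diff_subset).trans_lt hSfin).ne
  have hdecomp : (μ (S \ ⋃ j, T j)).toReal + ∑ j, (μ (S ∩ T j)).toReal = (μ S).toReal := by
    rw [← h1, h2, add_comm, ENNReal.toReal_add
      (by rw [← h2]; exact ((measure_mono Set.inter_subset_left).trans_lt hSfin).ne) hdfin,
      ENNReal.toReal_sum (fun j _ => hfin j)]
  have habs : (0:ℝ) ≤ |c| := abs_nonneg c
  rw [Real.mul_rpow habs ENNReal.toReal_nonneg, Real.mul_rpow habs ENNReal.toReal_nonneg,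
    ← Finset.mul_sum, ← mul_add]
  apply mul_le_mul_of_nonneg_left _ (Real.rpow_nonneg habs p)
  calc (μ (S \ ⋃ j, T j)).toReal ^ p + ∑ j, (μ (S ∩ T j)).toReal ^ p
      ≤ ((μ (S \ ⋃ j, T j)).toReal + ∑ j, (μ (S ∩ T j)).toReal) ^ p := by
        have h3 := add_rpow_le' (x := (μ (S \ ⋃ j, T j)).toReal)
          (y := ∑ j, (μ (S ∩ T j)).toReal) ENNReal.toReal_nonneg
          (Finset.sum_nonneg fun j _ => ENNReal.toReal_nonneg) hp
        refine le_trans ?_ h3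
        gcongr
        exact sum_rpow_le_rpow_sum' _ _ p hp fun j _ => ENNReal.toReal_nonneg
    _ = (μ S).toReal ^ p := by rw [hdecomp]

/-- the key inequality used to prove the triangle inequality for the
`p`-norm on elementary simple functions. -/
theorem stmt_3 {α : Type*} [MeasurableSpace α] (μ : Measure α)
    (p : ℝ) (hp : 1 ≤ p)
    {ι κ : Type*} [Fintype ι] [Fintype κ]
    (I : ι → Set α) (I' : κ → Set α)
    (hI : ∀ i, MeasurableSet (I i)) (hI' : ∀ j, MeasurableSet (I' j))
    (hIfin : ∀ i, μ (I i) < ⊤) (hI'fin : ∀ j, μ (I' j) < ⊤)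
    (hIdisj : Pairwise (Function.onFun Disjoint I))
    (hI'disj : Pairwise (Function.onFun Disjoint I'))
    (k : ι → ℝ) (l : κ → ℝ) :
    ∑ i : ι, (|k i| * (μ (I i \ ⋃ j : κ, I' j)).toReal) ^ p
      + ∑ j : κ, (|l j| * (μ (I' j \ ⋃ i : ι, I i)).toReal) ^ p
      + ∑ i : ι, ∑ j : κ, (|k i| ^ p + |l j| ^ p) * (μ (I i ∩ I' j)).toReal ^ p
      ≤ ∑ i : ι, (|k i| * (μ (I i)).toReal) ^ p
        + ∑ j : κ, (|l j| * (μ (I' j)).toReal) ^ p := by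
  have hsplit : ∑ i : ι, ∑ j : κ, (|k i| ^ p + |l j| ^ p) * (μ (I i ∩ I' j)).toReal ^ p
      = (∑ i : ι, ∑ j : κ, |k i| ^ p * (μ (I i ∩ I' j)).toReal ^ p)
        + ∑ j : κ, ∑ i : ι, |l j| ^ p * (μ (I' j ∩ I i)).toReal ^ p := by
    simp_rw [add_mul, Finset.sum_add_distrib]
    congr 1
    rw [Finset.sum_comm]
    simp_rw [Set.inter_comm]
  rw [hsplit]
  have hk : ∀ i : ι,
      (|k i| * (μ (I i \ ⋃ j : κ, I' j)).toReal) ^ p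
        + ∑ j : κ, |k i| ^ p * (μ (I i ∩ I' j)).toReal ^ p
      ≤ (|k i| * (μ (I i)).toReal) ^ p :=
    fun i => key_ineq μ p hp (I i) (hI i) (hIfin i) I' hI' hI'disj (k i)
  have hl : ∀ j : κ,
      (|l j| * (μ (I' j \ ⋃ i : ι, I i)).toReal) ^ p
        + ∑ i : ι, |l j| ^ p * (μ (I' j ∩ I i)).toReal ^ p
      ≤ (|l j| * (μ (I' j)).toReal) ^ p :=
    fun j => key_ineq μ p hp (I' j) (hI' j) (hI'fin j) I hI hIdisj (l j)
  calc ∑ i : ι, (|k i| * (μ (I i \ ⋃ j : κ, I' j)).toReal) ^ p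
      + ∑ j : κ, (|l j| * (μ (I' j \ ⋃ i : ι, I i)).toReal) ^ p
      + ((∑ i : ι, ∑ j : κ, |k i| ^ p * (μ (I i ∩ I' j)).toReal ^ p)
        + ∑ j : κ, ∑ i : ι, |l j| ^ p * (μ (I' j ∩ I i)).toReal ^ p)
      = (∑ i : ι, ((|k i| * (μ (I i \ ⋃ j : κ, I' j)).toReal) ^ p
          + ∑ j : κ, |k i| ^ p * (μ (I i ∩ I' j)).toReal ^ p))
        + ∑ j : κ, ((|l j| * (μ (I' j \ ⋃ i : ι, I i)).toReal) ^ p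
          + ∑ i : ι, |l j| ^ p * (μ (I' j ∩ I i)).toReal ^ p) := by
        rw [Finset.sum_add_distrib, Finset.sum_add_distrib]; ring
    _ ≤ ∑ i : ι, (|k i| * (μ (I i)).toReal) ^ p
        + ∑ j : κ, (|l j| * (μ (I' j)).toReal) ^ p := by
        gcongr with i _ j _
        exacts [hk i, hl j]
end

section
/- Let V be a normed real vector space and δ : V × V → V any function. Let T, T' : L¹([0,1];ℝ) → V be continuous linear maps such that T(𝟙) = T'(𝟙) and, for all f, g ∈ L¹([0,1];ℝ), T(γ(f,g)) = δ(T(f), T(g)) and T'(γ(f,g)) = δ(T'(f), T'(g)). Then T = T'. -/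
open MeasureTheory

/-- Lebesgue measure restricted to `[0,1]`. -/
noncomputable def μ01 : Measure ℝ := volume.restrict (Set.Icc 0 1)

/-- The space `L¹([0,1]; ℝ)`. -/
abbrev L1 : Type := Lp ℝ 1 μ01

/-- `γ : L1 → L1 → L1` is the juxtaposition operation: `γ f g` agrees a.e. with
`x ↦ f (2x)` on `[0, 1/2)` and with `x ↦ g (2x − 1)` on `[1/2, 1]`. -/
def IsJux (γ : L1 → L1 → L1) : Prop :=
  ∀ f g : L1,
    (∀ᵐ x ∂μ01, x ∈ Set.Ico (0 : ℝ) (1 / 2) → γ f g x = f (2 * x)) ∧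
    (∀ᵐ x ∂μ01, x ∈ Set.Icc (1 / 2 : ℝ) 1 → γ f g x = g (2 * x - 1))

/-- `one : L1` is the class of the constant function `1`. -/
def IsOne (one : L1) : Prop := (one : ℝ → ℝ) =ᵐ[μ01] fun _ => (1 : ℝ)

/-! The maps agree on the closed subspace `eqLocus T T'`, which contains `𝟙` and is closed
under `γ`. If `s₀ = {x | x / 2 ∈ s}` and `s₁ = {x | (x + 1) / 2 ∈ s}`, then `γ` sends the
indicators of `s₀` and `s₁` to the indicator of `s`. So induction on the dyadic level puts
into the subspace the indicator of every set that is a union of dyadic intervals of a fixed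
length. These sets form an algebra that generates the Borel σ-algebra, so their indicators
span a dense subspace of `L¹`. -/

open Set Filter

namespace MeasureTheory

theorem Lp.addSubgroup_eq_top_of_measureDense {α E : Type*} [MeasurableSpace α]
    [NormedAddCommGroup E] {μ : Measure α} {p : ENNReal} [Fact (1 ≤ p)] (hp : p ≠ ⊤)
    {𝒜 : Set (Set α)} (h𝒜 : μ.MeasureDense 𝒜) (S : AddSubgroup (Lp E p μ))
    (hS : IsClosed (S : Set (Lp E p μ)))
    (hind : ∀ s (hs : s ∈ 𝒜) (hμs : μ s ≠ ⊤) (c : E),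
      indicatorConstLp p (h𝒜.measurable s hs) hμs c ∈ S) :
    S = ⊤ := by
  have : Fact (p ≠ ⊤) := ⟨hp⟩
  refine eq_top_iff.2 fun f _ ↦
    Lp.induction hp (· ∈ S) (fun c s hs hμs ↦ ?_) (fun _ _ _ _ _ ↦ S.add_mem) hS f
  have h𝒜S : {indicatorConstLp p (h𝒜.measurable t ht) hμt c |
      (t : Set α) (ht : t ∈ 𝒜) (hμt : μ t ≠ ⊤)} ⊆ S := by
    rintro - ⟨t, ht, hμt, rfl⟩
    exact hind t ht hμt c
  exact hS.closure_subset_iff.2 h𝒜S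
    (h𝒜.indicatorConstLp_subset_closure p c ⟨s, hs, hμs.ne, rfl⟩)

end MeasureTheory

open MeasureTheory

theorem Real.quasiMeasurePreserving_mul_sub {a : ℝ} (ha : a ≠ 0) (b : ℝ) :
    Measure.QuasiMeasurePreserving (fun x : ℝ ↦ a * x - b) :=
  (measurePreserving_sub_right volume b).quasiMeasurePreserving.comp
    (Measure.quasiMeasurePreserving_smul volume ha)

def dyadicCell (n k : ℕ) : Set ℝ := (fun x ↦ x * 2 ^ n) ⁻¹' Ico (k : ℝ) (k + 1)

theorem dyadicCell_zero_zero : dyadicCell 0 0 = Ico 0 1 := by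
  ext x
  simp [dyadicCell]

theorem dyadicCell_succ_subset (n k : ℕ) : dyadicCell (n + 1) k ⊆ dyadicCell n (k / 2) := by
  intro x ⟨hk, hk1⟩
  have hfloor : ((k / 2 : ℕ) : ℝ) ≤ k / 2 := Nat.cast_div_le
  have hceil : (k : ℝ) + 1 ≤ 2 * ((k / 2 : ℕ) + 1) := by
    exact_mod_cast (by omega : k + 1 ≤ 2 * (k / 2 + 1))
  simp only [pow_succ] at hk hk1
  constructor <;> linarith

theorem mapsTo_div_two_dyadicCell (n k : ℕ) :
    MapsTo (· / 2) (dyadicCell n k) (dyadicCell (n + 1) k) := by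
  intro x hx
  have h : x / 2 * 2 ^ (n + 1) = x * 2 ^ n := by ring
  simpa only [dyadicCell, mem_preimage, h] using hx

theorem mapsTo_add_one_div_two_dyadicCell (n k : ℕ) :
    MapsTo (fun x ↦ (x + 1) / 2) (dyadicCell n k) (dyadicCell (n + 1) (k + 2 ^ n)) := by
  intro x ⟨hk, hk1⟩
  have h : (x + 1) / 2 * 2 ^ (n + 1) = x * 2 ^ n + 2 ^ n := by ring
  constructor <;> simp only [h] <;> push_cast <;> linarith

def IsDyadicAtLevel (n : ℕ) (s : Set ℝ) : Prop :=
  ∀ k, dyadicCell n k ⊆ s ∨ Disjoint (dyadicCell n k) s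

theorem IsDyadicAtLevel.preimage {m n : ℕ} {s : Set ℝ} (hs : IsDyadicAtLevel m s)
    {f : ℝ → ℝ} (hf : ∀ k, ∃ j, MapsTo f (dyadicCell n k) (dyadicCell m j)) :
    IsDyadicAtLevel n (f ⁻¹' s) := by
  intro k
  obtain ⟨j, hj⟩ := hf k
  rcases hs j with hsub | hdisj
  · exact .inl (hj.subset_preimage.trans (preimage_mono hsub))
  · exact .inr ((hdisj.preimage f).mono_left hj.subset_preimage)

theorem IsDyadicAtLevel.mono {m n : ℕ} (hmn : m ≤ n) {s : Set ℝ} (hs : IsDyadicAtLevel m s) :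
    IsDyadicAtLevel n s := by
  induction n, hmn using Nat.le_induction with
  | base => exact hs
  | succ n _ ih =>
    exact ih.preimage fun k ↦ ⟨k / 2, (mapsTo_id _).mono_right (dyadicCell_succ_subset n k)⟩

theorem isDyadicAtLevel_Iio (n : ℕ) (a : ℤ) : IsDyadicAtLevel n (Iio (a / 2 ^ n)) := by
  intro k
  have h2n : (0 : ℝ) < 2 ^ n := by positivity
  rcases le_or_gt ((k : ℤ) + 1) a with hka | hak
  · refine .inl fun x ⟨_, hx⟩ ↦ ?_
    rw [mem_Iio, lt_div_iff₀ h2n]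
    have : (k : ℝ) + 1 ≤ a := by exact_mod_cast hka
    linarith
  · refine .inr (disjoint_left.2 fun x ⟨hx, _⟩ hxa ↦ ?_)
    rw [mem_Iio, lt_div_iff₀ h2n] at hxa
    have : (a : ℝ) ≤ k := by exact_mod_cast (by omega : a ≤ k)
    linarith

def dyadicAlgebra : Set (Set ℝ) := {s | MeasurableSet s ∧ ∃ n, IsDyadicAtLevel n s}

theorem isSetAlgebra_dyadicAlgebra : IsSetAlgebra dyadicAlgebra where
  empty_mem := ⟨.empty, 0, fun _ ↦ .inr (disjoint_empty _)⟩
  compl_mem := by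
    rintro s ⟨hs, n, hn⟩
    refine ⟨hs.compl, n, fun k ↦ (hn k).symm.imp (fun h ↦ ?_) fun h ↦ ?_⟩
    · exact h.subset_compl_right
    · exact disjoint_compl_right.mono_right (compl_subset_compl.2 h)
  union_mem := by
    rintro s t ⟨hs, m, hm⟩ ⟨ht, n, hn⟩
    refine ⟨hs.union ht, max m n, fun k ↦ ?_⟩
    rcases hm.mono (le_max_left m n) k, hn.mono (le_max_right m n) k with
      ⟨hsub | hdisj, hsub' | hdisj'⟩
    · exact .inl (hsub.trans subset_union_left)
    · exact .inl (hsub.trans subset_union_left)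
    · exact .inl (hsub'.trans subset_union_right)
    · exact .inr (disjoint_union_right.2 ⟨hdisj, hdisj'⟩)

theorem iUnion_Iio_dyadic (c : ℝ) :
    ⋃ n : ℕ, Iio (((⌈c * 2 ^ n⌉ - 1 : ℤ) : ℝ) / 2 ^ n) = Iio c := by
  ext x
  simp only [mem_iUnion, mem_Iio]
  constructor
  · rintro ⟨n, hx⟩
    refine hx.trans ?_
    rw [div_lt_iff₀ (by positivity)]
    push_cast
    linarith [Int.ceil_lt_add_one (c * 2 ^ n)]
  · intro hx
    obtain ⟨n, hn⟩ := pow_unbounded_of_one_lt (c - x)⁻¹ one_lt_two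
    refine ⟨n, ?_⟩
    rw [lt_div_iff₀ (by positivity)]
    have : 1 < (c - x) * 2 ^ n := by rwa [inv_lt_iff_one_lt_mul₀' (sub_pos.2 hx)] at hn
    push_cast
    linarith [Int.le_ceil (c * 2 ^ n)]

theorem measurableSpace_eq_generateFrom_dyadicAlgebra :
    Real.measurableSpace = MeasurableSpace.generateFrom dyadicAlgebra := by
  refine le_antisymm ?_ (MeasurableSpace.generateFrom_le fun s hs ↦ hs.1)
  rw [BorelSpace.measurable_eq (α := ℝ), borel_eq_generateFrom_Iio]
  refine MeasurableSpace.generateFrom_le ?_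
  rintro _ ⟨c, rfl⟩
  rw [← iUnion_Iio_dyadic]
  exact .iUnion fun n ↦
    MeasurableSpace.measurableSet_generateFrom ⟨measurableSet_Iio, n, isDyadicAtLevel_Iio n _⟩

instance : IsFiniteMeasure μ01 := by
  unfold μ01
  infer_instance

theorem ae_mem_Ico_μ01 : ∀ᵐ x ∂μ01, x ∈ Ico (0 : ℝ) 1 := by
  rw [μ01, ← Measure.restrict_congr_set Ico_ae_eq_Icc]
  exact ae_restrict_mem measurableSet_Ico

theorem Filter.EventuallyEq.comp_two_mul_sub_μ01 {φ ψ : ℝ → ℝ} (h : φ =ᵐ[μ01] ψ)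
    (b : ℝ) :
    ∀ᵐ x ∂μ01, 2 * x - b ∈ Icc (0 : ℝ) 1 → φ (2 * x - b) = ψ (2 * x - b) := by
  rw [μ01, EventuallyEq, ae_restrict_iff' measurableSet_Icc] at h
  exact ae_restrict_of_ae ((Real.quasiMeasurePreserving_mul_sub two_ne_zero b).ae h)

theorem IsJux.indicatorConstLp_eq {γ : L1 → L1 → L1} (hγ : IsJux γ) {s : Set ℝ}
    (hs : MeasurableSet s) (c : ℝ) :
    γ (indicatorConstLp 1 (hs.preimage (measurable_id.div_const 2)) (measure_ne_top _ _) c)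
      (indicatorConstLp 1 (hs.preimage ((measurable_id.add_const 1).div_const 2))
        (measure_ne_top _ _) c) =
    indicatorConstLp 1 hs (measure_ne_top _ _) c := by
  set f := indicatorConstLp 1 (hs.preimage (measurable_id.div_const 2)) (measure_ne_top μ01 _) c
  set g := indicatorConstLp 1 (hs.preimage ((measurable_id.add_const 1).div_const 2))
    (measure_ne_top μ01 _) c
  obtain ⟨hleft, hright⟩ := hγ f g
  have hf := (indicatorConstLp_coeFn : ⇑f =ᵐ[μ01] _).comp_two_mul_sub_μ01 0
  have hg := (indicatorConstLp_coeFn : ⇑g =ᵐ[μ01] _).comp_two_mul_sub_μ01 1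
  have hind := indicatorConstLp_coeFn (hs := hs) (hμs := measure_ne_top μ01 s) (p := 1) (c := c)
  refine Lp.ext ?_
  filter_upwards [hleft, hright, hf, hg, hind, ae_mem_Ico_μ01]
    with x hl hr hf hg hind ⟨hx0, hx1⟩
  rw [hind]
  rcases lt_or_ge x (1 / 2) with hx | hx
  · rw [hl ⟨hx0, hx⟩, ← sub_zero (2 * x), hf ⟨by linarith, by linarith⟩]
    by_cases hxs : x ∈ s <;> simp [hxs]
  · rw [hr ⟨hx, hx1.le⟩, hg ⟨by linarith, by linarith⟩]
    by_cases hxs : x ∈ s <;> simp [hxs]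

theorem IsJux.indicatorConstLp_mem_of_isDyadicAtLevel {γ : L1 → L1 → L1} (hγ : IsJux γ)
    {one : L1} (hone : IsOne one) {S : Submodule ℝ L1}
    (hγS : ∀ f ∈ S, ∀ g ∈ S, γ f g ∈ S) (honeS : one ∈ S) {n : ℕ} {s : Set ℝ}
    (hn : IsDyadicAtLevel n s) (hs : MeasurableSet s) (c : ℝ) :
    indicatorConstLp 1 hs (measure_ne_top μ01 s) c ∈ S := by
  induction n generalizing s with
  | zero =>
    have hind := indicatorConstLp_coeFn (hs := hs) (hμs := measure_ne_top μ01 s) (p := 1) (c := c)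
    obtain hsub | hdisj := dyadicCell_zero_zero ▸ hn 0
    · convert S.smul_mem c honeS using 1
      refine Lp.ext ?_
      filter_upwards [hind, Lp.coeFn_smul c one, hone, ae_mem_Ico_μ01] with x hx hcx h1x hx01
      rw [hx, hcx, Pi.smul_apply, h1x, indicator_of_mem (hsub hx01), smul_eq_mul, mul_one]
    · convert S.zero_mem using 1
      refine Lp.ext ?_
      filter_upwards [hind, Lp.coeFn_zero ℝ 1 μ01, ae_mem_Ico_μ01] with x hx h0x hx01
      rw [hx, h0x, indicator_of_notMem (disjoint_left.1 hdisj hx01), Pi.zero_apply]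
  | succ n ih =>
    rw [← hγ.indicatorConstLp_eq hs c]
    exact hγS _ (ih (hn.preimage fun k ↦ ⟨k, mapsTo_div_two_dyadicCell n k⟩) _) _
      (ih (hn.preimage fun k ↦ ⟨k + 2 ^ n, mapsTo_add_one_div_two_dyadicCell n k⟩) _)

/-- two continuous linear maps out of `L¹([0,1];ℝ)` that agree on `𝟙`
and both intertwine the juxtaposition `γ` with a common operation `δ` coincide. -/
theorem stmt_5 {V : Type*} [NormedAddCommGroup V] [NormedSpace ℝ V]
    (δ : V × V → V)
    (γ : L1 → L1 → L1) (hγ : IsJux γ)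
    (one : L1) (hone : IsOne one)
    (T T' : L1 →L[ℝ] V)
    (h1 : T one = T' one)
    (hT : ∀ f g : L1, T (γ f g) = δ (T f, T g))
    (hT' : ∀ f g : L1, T' (γ f g) = δ (T' f, T' g)) :
    T = T' := by
  let S : Submodule ℝ L1 := (T : L1 →ₗ[ℝ] V).eqLocus T'
  have hγS : ∀ f ∈ S, ∀ g ∈ S, γ f g ∈ S :=
    fun f (hf : T f = T' f) g (hg : T g = T' g) ↦
      show T (γ f g) = T' (γ f g) by rw [hT, hT', hf, hg]
  have hdense : μ01.MeasureDense dyadicAlgebra :=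
    .of_generateFrom_isSetAlgebra_finite μ01 isSetAlgebra_dyadicAlgebra
      measurableSpace_eq_generateFrom_dyadicAlgebra
  have hS : S.toAddSubgroup = ⊤ :=
    Lp.addSubgroup_eq_top_of_measureDense ENNReal.one_ne_top hdense _ (T.isClosed_eqLocus T')
      fun s ⟨_, _, hn⟩ _ c ↦ hγ.indicatorConstLp_mem_of_isDyadicAtLevel hone hγS h1 hn _ c
  ext f
  exact (AddSubgroup.eq_top_iff' _).1 hS f
end

section
/- The map T₀ : L¹([0,1];ℝ) → C([0,1];ℝ) defined by (T₀ f)(x) = ∫_{[0,x]} f is a well-defined continuous linear map (C([0,1];ℝ) carrying the sup norm), it satisfies T₀(𝟙) = (x ↦ x) and T₀(γ(f,g)) = κ(T₀ f, T₀ g) for all f, g ∈ L¹([0,1];ℝ), and it is the unique continuous linear map L¹([0,1];ℝ) → C([0,1];ℝ) with these two properties. -/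
open MeasureTheory

/-- The juxtaposition `κ(F₁,F₂)` of two functions on `[0,1]`:
`κ(F₁,F₂)(x) = F₁(2x)/2` for `x < 1/2` and `(F₁(1) + F₂(2x−1))/2` for `x ≥ 1/2`. -/
noncomputable def kappaI (F₁ F₂ : Set.Icc (0:ℝ) 1 → ℝ) : Set.Icc (0:ℝ) 1 → ℝ :=
  fun x =>
    if h : (x : ℝ) < 1 / 2 then
      (1 / 2) * F₁ ⟨2 * (x : ℝ), ⟨by have := x.2.1; linarith, by linarith⟩⟩
    else
      (1 / 2) * (F₁ ⟨1, by norm_num⟩ +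
        F₂ ⟨2 * (x : ℝ) - 1, ⟨by have := not_lt.mp h; linarith,
          by have := x.2.2; linarith⟩⟩)

/-!
`T₀` is bounded because `|∫₀ˣ f| ≤ ‖f‖₁`, and `T₀ (γ f g) = κ(T₀ f, T₀ g)` is the change of
variables `t ↦ 2t` on `[0, 1/2]` and `t ↦ 2t - 1` on `[1/2, 1]`. For uniqueness, `n` rounds of
juxtaposition starting from multiples of `𝟙` produce every step function on the dyadic intervals
of length `2⁻ⁿ`; any `T` with the two properties agrees with `T₀` on these by induction on `n`.
Sampling a continuous function at dyadic points approximates it uniformly, so dyadic step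
functions are dense in `L¹`, and `T = T₀` by continuity.
-/

open Set Filter
open scoped BoundedContinuousFunction

instance : IsProbabilityMeasure μ01 :=
  ⟨by rw [μ01, Measure.restrict_apply_univ, Real.volume_Icc]; norm_num⟩

instance : NullSingletonClass μ01 := by rw [μ01]; infer_instance

lemma ae_μ01_iff {P : ℝ → Prop} : (∀ᵐ t ∂μ01, P t) ↔ ∀ᵐ t, t ∈ Icc (0 : ℝ) 1 → P t :=
  ae_restrict_iff' measurableSet_Icc

lemma setIntegral_μ01_Icc (f : ℝ → ℝ) {x : ℝ} (hx0 : 0 ≤ x) (hx1 : x ≤ 1) :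
    ∫ t in Icc 0 x, f t ∂μ01 = ∫ t in (0 : ℝ)..x, f t := by
  rw [μ01, Measure.restrict_restrict measurableSet_Icc,
    inter_eq_left.mpr (Icc_subset_Icc le_rfl hx1), intervalIntegral.integral_of_le hx0,
    integral_Icc_eq_integral_Ioc]

lemma L1.intervalIntegrable (f : L1) {a b : ℝ} (ha : a ∈ Icc (0 : ℝ) 1) (hb : b ∈ Icc (0 : ℝ) 1) :
    IntervalIntegrable f volume a b := by
  have h01 : IntervalIntegrable f volume 0 1 :=
    (intervalIntegrable_iff_integrableOn_Icc_of_le zero_le_one).2 (L1.integrable_coeFn f)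
  exact h01.mono_set (uIcc_subset_uIcc (by simpa [uIcc_of_le zero_le_one] using ha)
    (by simpa [uIcc_of_le zero_le_one] using hb))

lemma intervalIntegral_congr_of_ae_eq_μ01 {u v : ℝ → ℝ} (h : u =ᵐ[μ01] v) {a b : ℝ}
    (ha : a ∈ Icc (0 : ℝ) 1) (hb : b ∈ Icc (0 : ℝ) 1) :
    ∫ t in a..b, u t = ∫ t in a..b, v t := by
  refine intervalIntegral.integral_congr_ae ?_
  filter_upwards [ae_μ01_iff.1 h] with t ht htab
  exact ht (uIcc_subset_Icc ha hb (uIoc_subset_uIcc htab))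

noncomputable def primitive (f : L1) : C(Icc (0 : ℝ) 1, ℝ) :=
  ⟨fun x => ∫ t in Icc 0 (x : ℝ), f t ∂μ01,
    (intervalIntegral.continuousOn_primitive_Icc (L1.integrable_coeFn f).integrableOn).domRestrict⟩

lemma primitive_apply (f : L1) (x : Icc (0 : ℝ) 1) :
    primitive f x = ∫ t in (0 : ℝ)..x, f t :=
  setIntegral_μ01_Icc _ x.2.1 x.2.2

lemma norm_primitive_le (f : L1) : ‖primitive f‖ ≤ ‖f‖ := by
  refine (ContinuousMap.norm_le _ (norm_nonneg f)).2 fun x => ?_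
  calc ‖primitive f x‖ ≤ ∫ t in Icc 0 (x : ℝ), ‖f t‖ ∂μ01 := norm_integral_le_integral_norm _
    _ ≤ ∫ t, ‖f t‖ ∂μ01 :=
      setIntegral_le_integral (L1.integrable_coeFn f).norm (.of_forall fun _ => norm_nonneg _)
    _ = ‖f‖ := (L1.norm_eq_integral_norm f).symm

noncomputable def primitiveCLM : L1 →L[ℝ] C(Icc (0 : ℝ) 1, ℝ) :=
  LinearMap.mkContinuous
    { toFun := primitive
      map_add' := fun f g => ContinuousMap.ext fun x => by
        simp only [ContinuousMap.add_apply, primitive_apply]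
        rw [← intervalIntegral.integral_add (f.intervalIntegrable ⟨le_rfl, zero_le_one⟩ x.2)
          (g.intervalIntegrable ⟨le_rfl, zero_le_one⟩ x.2)]
        exact intervalIntegral_congr_of_ae_eq_μ01 (Lp.coeFn_add f g) ⟨le_rfl, zero_le_one⟩ x.2
      map_smul' := fun c f => ContinuousMap.ext fun x => by
        simp only [ContinuousMap.smul_apply, primitive_apply, RingHom.id_apply, smul_eq_mul]
        rw [← intervalIntegral.integral_const_mul]
        exact intervalIntegral_congr_of_ae_eq_μ01 (Lp.coeFn_smul c f) ⟨le_rfl, zero_le_one⟩ x.2 }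
    1 fun f => (one_mul ‖f‖).symm ▸ norm_primitive_le f

lemma primitiveCLM_apply (f : L1) (x : Icc (0 : ℝ) 1) :
    primitiveCLM f x = ∫ t in (0 : ℝ)..x, f t :=
  primitive_apply f x

lemma primitiveCLM_one {one : L1} (hone : IsOne one) (x : Icc (0 : ℝ) 1) :
    primitiveCLM one x = x := by
  rw [primitiveCLM_apply, intervalIntegral_congr_of_ae_eq_μ01 hone ⟨le_rfl, zero_le_one⟩ x.2]
  simp

lemma ae_comp_mul_add {P : ℝ → Prop} (h : ∀ᵐ t, P t) {a : ℝ} (ha : a ≠ 0) (b : ℝ) :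
    ∀ᵐ x, P (a * x + b) :=
  ((measurePreserving_add_right volume b).quasiMeasurePreserving.comp
    (Measure.quasiMeasurePreserving_smul volume ha)).ae h

-- Unlike `kappaI`, the midpoint goes to the left half, so the integrals over `[0, 1/2]` are exact.
noncomputable def juxtapose (A B : ℝ → ℝ) : ℝ → ℝ :=
  fun x => if x ≤ 1 / 2 then A (2 * x) else B (2 * x - 1)

lemma IsJux.ae_eq_juxtapose {γ : L1 → L1 → L1} (hγ : IsJux γ) {a b : L1} {A B : ℝ → ℝ}
    (ha : a =ᵐ[μ01] A) (hb : b =ᵐ[μ01] B) : γ a b =ᵐ[μ01] juxtapose A B := by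
  have hA := ae_comp_mul_add (ae_μ01_iff.1 ha) two_ne_zero 0
  have hB := ae_comp_mul_add (ae_μ01_iff.1 hb) two_ne_zero (-1)
  refine ae_μ01_iff.2 ?_
  filter_upwards [ae_μ01_iff.1 (hγ a b).1, ae_μ01_iff.1 (hγ a b).2, hA, hB,
    Measure.ae_ne volume (1 / 2)] with x hleft hright hAx hBx hne hx
  unfold juxtapose
  split_ifs with hle
  · rw [hleft hx ⟨hx.1, lt_of_le_of_ne hle hne⟩]
    simpa using hAx ⟨by linarith [hx.1], by linarith⟩
  · rw [not_le] at hle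
    rw [hright hx ⟨hle.le, hx.2⟩]
    simpa [← sub_eq_add_neg] using hBx ⟨by linarith, by linarith [hx.2]⟩

lemma integral_juxtapose_of_le_half (A B : ℝ → ℝ) {x : ℝ} (hx : x ≤ 1 / 2) :
    ∫ t in (0 : ℝ)..x, juxtapose A B t = 2⁻¹ * ∫ t in (0 : ℝ)..2 * x, A t := by
  have hA : EqOn (juxtapose A B) (fun t => A (2 * t)) (uIcc 0 x) := fun t ht =>
    if_pos (ht.2.trans (max_le (by norm_num) hx))
  rw [intervalIntegral.integral_congr hA, intervalIntegral.integral_comp_mul_left _ two_ne_zero,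
    mul_zero, smul_eq_mul]

lemma integral_juxtapose_of_half_le (A B : ℝ → ℝ) {x : ℝ} (hx : 1 / 2 ≤ x) :
    ∫ t in (1 / 2 : ℝ)..x, juxtapose A B t = 2⁻¹ * ∫ t in (0 : ℝ)..2 * x - 1, B t := by
  have hB : ∀ᵐ t, t ∈ uIoc (1 / 2 : ℝ) x → juxtapose A B t = B (2 * t - 1) :=
    .of_forall fun t ht => if_neg (not_le.2 (uIoc_of_le hx ▸ ht).1)
  rw [intervalIntegral.integral_congr_ae hB, intervalIntegral.integral_comp_mul_sub _ two_ne_zero,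
    smul_eq_mul]
  norm_num

lemma primitiveCLM_jux {γ : L1 → L1 → L1} (hγ : IsJux γ) (f g : L1) (x : Icc (0 : ℝ) 1) :
    primitiveCLM (γ f g) x = kappaI (primitiveCLM f) (primitiveCLM g) x := by
  have hjux := hγ.ae_eq_juxtapose (EventuallyEq.refl _ (f : ℝ → ℝ))
    (EventuallyEq.refl _ (g : ℝ → ℝ))
  have h0 : (0 : ℝ) ∈ Icc (0 : ℝ) 1 := left_mem_Icc.2 zero_le_one
  have hhalf : (1 / 2 : ℝ) ∈ Icc (0 : ℝ) 1 := by norm_num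
  rw [kappaI, primitiveCLM_apply]
  split_ifs with hlt
  · rw [intervalIntegral_congr_of_ae_eq_μ01 hjux h0 x.2,
      integral_juxtapose_of_le_half _ _ hlt.le, primitiveCLM_apply]
    norm_num
  · rw [not_lt] at hlt
    rw [← intervalIntegral.integral_add_adjacent_intervals
        ((γ f g).intervalIntegrable h0 hhalf) ((γ f g).intervalIntegrable hhalf x.2),
      intervalIntegral_congr_of_ae_eq_μ01 hjux h0 hhalf,
      intervalIntegral_congr_of_ae_eq_μ01 hjux hhalf x.2,
      integral_juxtapose_of_le_half _ _ le_rfl, integral_juxtapose_of_half_le _ _ hlt,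
      primitiveCLM_apply, primitiveCLM_apply]
    norm_num
    ring

-- The step function with value `φ (k / 2ⁿ)` on the `k`-th dyadic interval of length `2⁻ⁿ`.
noncomputable def dyadic (γ : L1 → L1 → L1) (one : L1) : ℕ → (ℝ → ℝ) → L1
  | 0, φ => φ 0 • one
  | n + 1, φ => γ (dyadic γ one n fun t => φ (t / 2)) (dyadic γ one n fun t => φ ((t + 1) / 2))

noncomputable def dyadicStep : ℕ → (ℝ → ℝ) → ℝ → ℝ
  | 0, φ => fun _ => φ 0
  | n + 1, φ =>
    juxtapose (dyadicStep n fun t => φ (t / 2)) (dyadicStep n fun t => φ ((t + 1) / 2))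

lemma dyadic_ae_eq {γ : L1 → L1 → L1} (hγ : IsJux γ) {one : L1} (hone : IsOne one) :
    ∀ (n : ℕ) (φ : ℝ → ℝ), dyadic γ one n φ =ᵐ[μ01] dyadicStep n φ
  | 0, φ => by
    filter_upwards [Lp.coeFn_smul (φ 0) one, hone] with t hsmul hone_t
    simp [dyadic, dyadicStep, hsmul, hone_t]
  | n + 1, _ => hγ.ae_eq_juxtapose (dyadic_ae_eq hγ hone n _) (dyadic_ae_eq hγ hone n _)

lemma exists_dyadicStep_eq : ∀ (n : ℕ) (φ : ℝ → ℝ) {x : ℝ}, x ∈ Icc (0 : ℝ) 1 →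
    ∃ y ∈ Icc (0 : ℝ) 1, |x - y| ≤ 2⁻¹ ^ n ∧ dyadicStep n φ x = φ y
  | 0, φ, x, hx => ⟨0, left_mem_Icc.2 zero_le_one, by simpa [abs_of_nonneg hx.1] using hx.2, rfl⟩
  | n + 1, φ, x, hx => by
    have hpow : (2⁻¹ : ℝ) ^ (n + 1) = 2⁻¹ ^ n / 2 := by rw [pow_succ]; ring
    simp only [dyadicStep, juxtapose, hpow, abs_le]
    split_ifs with hle
    · obtain ⟨y, hy, hdist, heq⟩ :=
        exists_dyadicStep_eq n (fun t => φ (t / 2)) (x := 2 * x) ⟨by linarith [hx.1], by linarith⟩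
      rw [abs_le] at hdist
      exact ⟨y / 2, ⟨by linarith [hy.1], by linarith [hy.2]⟩,
        ⟨by linarith [hdist.1], by linarith [hdist.2]⟩, heq⟩
    · obtain ⟨y, hy, hdist, heq⟩ := exists_dyadicStep_eq n (fun t => φ ((t + 1) / 2))
        (x := 2 * x - 1) ⟨by linarith [not_le.1 hle], by linarith [hx.2]⟩
      rw [abs_le] at hdist
      exact ⟨(y + 1) / 2, ⟨by linarith [hy.1], by linarith [hy.2]⟩,
        ⟨by linarith [hdist.1], by linarith [hdist.2]⟩, heq⟩

lemma exists_dyadicStep_approx {φ : ℝ → ℝ} (hφ : ContinuousOn φ (Icc 0 1)) {ε : ℝ}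
    (hε : 0 < ε) : ∃ n, ∀ x ∈ Icc (0 : ℝ) 1, |φ x - dyadicStep n φ x| < ε := by
  obtain ⟨δ, hδ, hφδ⟩ :=
    Metric.uniformContinuousOn_iff.1 (isCompact_Icc.uniformContinuousOn_of_continuous hφ) ε hε
  obtain ⟨n, hn⟩ := exists_pow_lt_of_lt_one hδ (by norm_num : (2⁻¹ : ℝ) < 1)
  refine ⟨n, fun x hx => ?_⟩
  obtain ⟨y, hy, hxy, heq⟩ := exists_dyadicStep_eq n φ hx
  rw [heq, ← Real.dist_eq]
  exact hφδ x hx y hy (by rw [Real.dist_eq]; linarith)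

lemma toLp_mem_closure_range_dyadic {γ : L1 → L1 → L1} (hγ : IsJux γ) {one : L1}
    (hone : IsOne one) (φ : ℝ →ᵇ ℝ) :
    BoundedContinuousFunction.toLp 1 μ01 ℝ φ ∈
      closure (range fun p : ℕ × (ℝ → ℝ) => dyadic γ one p.1 p.2) := by
  refine Metric.mem_closure_iff.2 fun ε hε => ?_
  obtain ⟨n, hn⟩ := exists_dyadicStep_approx φ.continuous.continuousOn (half_pos hε)
  refine ⟨_, ⟨(n, φ), rfl⟩, ?_⟩
  have hbound : ∀ᵐ t ∂μ01,
      ‖(BoundedContinuousFunction.toLp 1 μ01 ℝ φ - dyadic γ one n φ : L1) t‖ ≤ ε / 2 := by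
    filter_upwards [Lp.coeFn_sub (BoundedContinuousFunction.toLp 1 μ01 ℝ φ) (dyadic γ one n φ),
      BoundedContinuousFunction.coeFn_toLp 1 μ01 ℝ φ, dyadic_ae_eq hγ hone n φ,
      ae_μ01_iff.2 (.of_forall fun t ht => ht)] with t hsub hφt hdy ht
    rw [hsub, Pi.sub_apply, hφt, hdy]
    exact (hn t ht).le
  calc dist _ _ ≤ ε / 2 := by
        simpa [dist_eq_norm, measureUnivNNReal] using Lp.norm_le_of_ae_bound (half_pos hε).le hbound
    _ < ε := half_lt_self hε

lemma denseRange_dyadic {γ : L1 → L1 → L1} (hγ : IsJux γ) {one : L1} (hone : IsOne one) :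
    DenseRange fun p : ℕ × (ℝ → ℝ) => dyadic γ one p.1 p.2 :=
  dense_closure.1 <| (BoundedContinuousFunction.toLp_denseRange ℝ μ01 ℝ ENNReal.one_ne_top).mono
    (range_subset_iff.2 (toLp_mem_closure_range_dyadic hγ hone))

lemma map_dyadic_eq {F M : Type*} [AddCommMonoid M] [Module ℝ M] [FunLike F L1 M]
    [LinearMapClass F ℝ L1 M] {γ : L1 → L1 → L1} {one : L1} {T S : F} (h_one : T one = S one)
    (h_jux : ∀ f g, T f = S f → T g = S g → T (γ f g) = S (γ f g)) :
    ∀ (n : ℕ) (φ : ℝ → ℝ), T (dyadic γ one n φ) = S (dyadic γ one n φ)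
  | 0, φ => by simp only [dyadic, map_smul, h_one]
  | n + 1, _ => h_jux _ _ (map_dyadic_eq h_one h_jux n _) (map_dyadic_eq h_one h_jux n _)

/-- the map `T₀ : L¹([0,1];ℝ) → C([0,1];ℝ)`,
`(T₀ f)(x) = ∫_{[0,x]} f`, is a well-defined continuous linear map; it satisfies
`T₀ 𝟙 = (x ↦ x)` and `T₀ (γ f g) = κ(T₀ f, T₀ g)`, and it is the unique
continuous linear map with these two properties. -/
theorem stmt_10 (γ : L1 → L1 → L1) (hγ : IsJux γ)
    (one : L1) (hone : IsOne one) :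
    ∃ T₀ : L1 →L[ℝ] C(Set.Icc (0:ℝ) 1, ℝ),
      (∀ f : L1, ∀ x : Set.Icc (0:ℝ) 1,
        T₀ f x = ∫ t in Set.Icc 0 (x : ℝ), f t ∂μ01) ∧
      (∀ x : Set.Icc (0:ℝ) 1, T₀ one x = (x : ℝ)) ∧
      (∀ f g : L1, ∀ x : Set.Icc (0:ℝ) 1,
        T₀ (γ f g) x = kappaI (T₀ f) (T₀ g) x) ∧
      (∀ T : L1 →L[ℝ] C(Set.Icc (0:ℝ) 1, ℝ),
        (∀ x : Set.Icc (0:ℝ) 1, T one x = (x : ℝ)) →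
        (∀ f g : L1, ∀ x : Set.Icc (0:ℝ) 1,
          T (γ f g) x = kappaI (T f) (T g) x) →
        T = T₀) := by
  refine ⟨primitiveCLM, fun f x => rfl, primitiveCLM_one hone, primitiveCLM_jux hγ,
    fun T hT_one hT_jux => ?_⟩
  have h_one : T one = primitiveCLM one :=
    ContinuousMap.ext fun x => by rw [hT_one, primitiveCLM_one hone]
  have h_jux : ∀ f g, T f = primitiveCLM f → T g = primitiveCLM g →
      T (γ f g) = primitiveCLM (γ f g) := fun f g hf hg =>
    ContinuousMap.ext fun x => by rw [hT_jux, primitiveCLM_jux hγ, hf, hg]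
  exact DFunLike.coe_injective <| (denseRange_dyadic hγ hone).equalizer T.continuous
    primitiveCLM.continuous (funext fun p => map_dyadic_eq h_one h_jux p.1 p.2)
end
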